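/- The Kaup–Kupershmidt recursion operator N_KK := P₁_KK · P₀⁻¹ has identically vanishing coordinate Nijenhuis torsion on {y ≠ 0} ⊂ ℝ⁴. -/
import Mathlib


open Matrix

/-- Partial derivative `∂f/∂z^l` at `z`, coordinates `z = (p_x, p_y, x, y)`. -/
noncomputable def pd (l : Fin 4) (f : (Fin 4 → ℝ) → ℝ) (z : Fin 4 → ℝ) : ℝ :=
  fderiv ℝ f z (Pi.single l 1)

/-- Coordinate Nijenhuis torsion of a matrix-valued map on ℝ⁴. -/
noncomputable def nijenhuis (N : (Fin 4 → ℝ) → Matrix (Fin 4) (Fin 4) ℝ)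
    (z : Fin 4 → ℝ) (i j k : Fin 4) : ℝ :=
  ∑ l, (N z l j * pd l (fun w => N w i k) z - N z l k * pd l (fun w => N w i j) z
      - N z i l * pd j (fun w => N w l k) z + N z i l * pd k (fun w => N w l j) z)

/-- The canonical Poisson tensor `P₀` in the ordering `(p_x, p_y, x, y)`. -/
def P0 : Matrix (Fin 4) (Fin 4) ℝ :=
  !![0, 0, -1, 0;
     0, 0, 0, -1;
     1, 0, 0, 0;
     0, 1, 0, 0]

/-- The deformed Poisson tensor `P₁` for the Kaup–Kupershmidt system. -/
noncomputable def P1KK (a ω : ℝ) (z : Fin 4 → ℝ) : Matrix (Fin 4) (Fin 4) ℝ :=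
  let px := z 0; let py := z 1; let x := z 2; let y := z 3
  !![0, 6*py*(a*y^2 + 8*x*(a*x+ω))/y^2, -(4*a*x+3*ω), 2*(a*y^2 + 24*x*(a*x+ω))/y;
     -(6*py*(a*y^2 + 8*x*(a*x+ω))/y^2), 0, -(a*y) + 3*px*py/y^2, 8*a*x + 3*ω + 6*py^2/y^2;
     4*a*x+3*ω, a*y - 3*px*py/y^2, 0, -(3*px)/y;
     -(2*(a*y^2 + 24*x*(a*x+ω))/y), -(8*a*x + 3*ω + 6*py^2/y^2), 3*px/y, 0]

/-- The Kaup–Kupershmidt recursion operator `N_KK = P₁_KK · P₀⁻¹`. -/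
noncomputable def NKK (a ω : ℝ) (z : Fin 4 → ℝ) : Matrix (Fin 4) (Fin 4) ℝ :=
  P1KK a ω z * P0⁻¹

/- ### auxiliary machinery -/

noncomputable def fA (a ω : ℝ) (z : Fin 4 → ℝ) : ℝ := 4*a*z 2 + 3*ω
noncomputable def fB (a ω : ℝ) (z : Fin 4 → ℝ) : ℝ :=
  -(2*(a*(z 3*z 3) + 24*z 2*(a*z 2+ω))*(z 3)⁻¹)
noncomputable def fC (a ω : ℝ) (z : Fin 4 → ℝ) : ℝ :=
  6*z 1*(a*(z 3*z 3) + 8*z 2*(a*z 2+ω))*(z 3*z 3)⁻¹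
noncomputable def fD (a : ℝ) (z : Fin 4 → ℝ) : ℝ := a*z 3 - 3*z 0*z 1*(z 3*z 3)⁻¹
noncomputable def fE (a ω : ℝ) (z : Fin 4 → ℝ) : ℝ :=
  -(8*a*z 2 + 3*ω + 6*(z 1*z 1)*(z 3*z 3)⁻¹)
noncomputable def fF (z : Fin 4 → ℝ) : ℝ := 3*z 0*(z 3)⁻¹

lemma hcoord (i : Fin 4) (z : Fin 4 → ℝ) :
    HasFDerivAt (fun w : Fin 4 → ℝ => w i)
      (ContinuousLinearMap.proj (R := ℝ) (φ := fun _ : Fin 4 => ℝ) i) z := by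
  exact (ContinuousLinearMap.proj (R := ℝ) (φ := fun _ : Fin 4 => ℝ) i).hasFDerivAt

lemma hinv {z : Fin 4 → ℝ} {g : (Fin 4 → ℝ) → ℝ} {g'} (hg : HasFDerivAt g g' z)
    (h0 : g z ≠ 0) : HasFDerivAt (fun w => (g w)⁻¹)
      (((1 : ℝ →L[ℝ] ℝ).smulRight (-(g z ^ 2)⁻¹)).comp g') z :=
  (hasFDerivAt_inv h0).comp z hg

section pdlemmas
variable (a ω : ℝ) (z : Fin 4 → ℝ)

lemma pd_zero (l : Fin 4) : pd l (fun _ => (0:ℝ)) z = 0 := by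
  simp [pd]

lemma pd_fA (l : Fin 4) : pd l (fA a ω) z = 4*a*(Pi.single l 1 : Fin 4 → ℝ) 2 := by
  have h : HasFDerivAt (fA a ω) _ z := ((hcoord 2 z).const_mul (4*a)).add_const (3*ω)
  rw [pd, h.fderiv]; simp

lemma pd_fB (hy : z 3 ≠ 0) (l : Fin 4) :
    pd l (fB a ω) z =
      (Pi.single l 1 : Fin 4 → ℝ) 2 * (-(48*ω) - 96*z 2*a)/z 3
      + (Pi.single l 1 : Fin 4 → ℝ) 3 * (-(2*a) + (48*z 2*ω + 48*z 2*z 2*a)/(z 3*z 3)) := by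
  have h : HasFDerivAt (fB a ω) _ z :=
    (((((hcoord 3 z).mul (hcoord 3 z)).const_mul a).add
      (((hcoord 2 z).const_mul 24).mul (((hcoord 2 z).const_mul a).add_const ω))).const_mul 2
      |>.mul (hinv (hcoord 3 z) hy)).neg
  rw [pd, h.fderiv]; simp; field_simp; ring

lemma pd_fC (hy : z 3 ≠ 0) (l : Fin 4) :
    pd l (fC a ω) z =
      (Pi.single l 1 : Fin 4 → ℝ) 1 * (6*a + (48*z 2*ω + 48*z 2*z 2*a)/(z 3*z 3))
      + (Pi.single l 1 : Fin 4 → ℝ) 2 * (48*z 1*ω + 96*z 1*z 2*a)/(z 3*z 3)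
      + (Pi.single l 1 : Fin 4 → ℝ) 3 *
          (-(96*z 1*z 2*ω) - 96*z 1*z 2*z 2*a)/(z 3*z 3*z 3) := by
  have hy2 : z 3 * z 3 ≠ 0 := mul_ne_zero hy hy
  have h : HasFDerivAt (fC a ω) _ z :=
    (((hcoord 1 z).const_mul 6).mul
      ((((hcoord 3 z).mul (hcoord 3 z)).const_mul a).add
        (((hcoord 2 z).const_mul 8).mul (((hcoord 2 z).const_mul a).add_const ω)))).mul
      (hinv ((hcoord 3 z).mul (hcoord 3 z)) hy2)
  rw [pd, h.fderiv]; simp; field_simp; ring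

lemma pd_fD (hy : z 3 ≠ 0) (l : Fin 4) :
    pd l (fD a) z =
      (Pi.single l 1 : Fin 4 → ℝ) 0 * (-(3*z 1))/(z 3*z 3)
      + (Pi.single l 1 : Fin 4 → ℝ) 1 * (-(3*z 0))/(z 3*z 3)
      + (Pi.single l 1 : Fin 4 → ℝ) 3 * (a + 6*z 0*z 1/(z 3*z 3*z 3)) := by
  have hy2 : z 3 * z 3 ≠ 0 := mul_ne_zero hy hy
  have h : HasFDerivAt (fD a) _ z :=
    ((hcoord 3 z).const_mul a).sub
      ((((hcoord 0 z).const_mul 3).mul (hcoord 1 z)).mul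
        (hinv ((hcoord 3 z).mul (hcoord 3 z)) hy2))
  rw [pd, h.fderiv]; simp; field_simp; ring

lemma pd_fE (hy : z 3 ≠ 0) (l : Fin 4) :
    pd l (fE a ω) z =
      (Pi.single l 1 : Fin 4 → ℝ) 1 * (-(12*z 1))/(z 3*z 3)
      + (Pi.single l 1 : Fin 4 → ℝ) 2 * (-(8*a))
      + (Pi.single l 1 : Fin 4 → ℝ) 3 * (12*z 1*z 1)/(z 3*z 3*z 3) := by
  have hy2 : z 3 * z 3 ≠ 0 := mul_ne_zero hy hy
  have h : HasFDerivAt (fE a ω) _ z :=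
    ((((hcoord 2 z).const_mul (8*a)).add_const (3*ω)).add
      ((((hcoord 1 z).mul (hcoord 1 z)).const_mul 6).mul
        (hinv ((hcoord 3 z).mul (hcoord 3 z)) hy2))).neg
  rw [pd, h.fderiv]; simp; field_simp; ring

lemma pd_fF (hy : z 3 ≠ 0) (l : Fin 4) :
    pd l fF z =
      (Pi.single l 1 : Fin 4 → ℝ) 0 * 3/z 3
      + (Pi.single l 1 : Fin 4 → ℝ) 3 * (-(3*z 0))/(z 3*z 3) := by
  have h : HasFDerivAt fF _ z := ((hcoord 0 z).const_mul 3).mul (hinv (hcoord 3 z) hy)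
  rw [pd, h.fderiv]; simp; field_simp; ring

lemma pd_fCm (hy : z 3 ≠ 0) (l : Fin 4) :
    pd l (fun w => -fC a ω w) z =
      -((Pi.single l 1 : Fin 4 → ℝ) 1 * (6*a + (48*z 2*ω + 48*z 2*z 2*a)/(z 3*z 3))
      + (Pi.single l 1 : Fin 4 → ℝ) 2 * (48*z 1*ω + 96*z 1*z 2*a)/(z 3*z 3)
      + (Pi.single l 1 : Fin 4 → ℝ) 3 *
          (-(96*z 1*z 2*ω) - 96*z 1*z 2*z 2*a)/(z 3*z 3*z 3)) := by
  have hy2 : z 3 * z 3 ≠ 0 := mul_ne_zero hy hy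
  have h : HasFDerivAt (fun w => -fC a ω w) _ z :=
    ((((hcoord 1 z).const_mul 6).mul
      ((((hcoord 3 z).mul (hcoord 3 z)).const_mul a).add
        (((hcoord 2 z).const_mul 8).mul (((hcoord 2 z).const_mul a).add_const ω)))).mul
      (hinv ((hcoord 3 z).mul (hcoord 3 z)) hy2)).neg
  rw [pd, h.fderiv]; simp; field_simp; ring

lemma pd_fFm (hy : z 3 ≠ 0) (l : Fin 4) :
    pd l (fun w => -fF w) z =
      -((Pi.single l 1 : Fin 4 → ℝ) 0 * 3/z 3
      + (Pi.single l 1 : Fin 4 → ℝ) 3 * (-(3*z 0))/(z 3*z 3)) := by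
  have h : HasFDerivAt (fun w => -fF w) _ z :=
    (((hcoord 0 z).const_mul 3).mul (hinv (hcoord 3 z) hy)).neg
  rw [pd, h.fderiv]; simp; field_simp; ring

end pdlemmas

lemma P0_inv : P0⁻¹ = !![0, 0, 1, 0; 0, 0, 0, 1; -1, 0, 0, 0; 0, -1, 0, 0] := by
  apply Matrix.inv_eq_right_inv
  ext i j
  fin_cases i <;> fin_cases j <;>
    simp [P0, Matrix.mul_apply, Fin.sum_univ_four, Matrix.one_apply, Matrix.vecHead,
      Matrix.vecTail]

lemma NKK_eq (a ω : ℝ) (w : Fin 4 → ℝ) :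
    NKK a ω w =
      !![fA a ω w, fB a ω w, 0, fC a ω w;
         fD a w, fE a ω w, -fC a ω w, 0;
         0, fF w, fA a ω w, fD a w;
         -fF w, 0, fB a ω w, fE a ω w] := by
  ext i j
  fin_cases i <;> fin_cases j <;>
    · simp [NKK, P1KK, P0_inv, Matrix.mul_apply, Fin.sum_univ_four, fA, fB, fC, fD, fE, fF,
        Matrix.vecHead, Matrix.vecTail]
      try ring

lemma nij_diag (N : (Fin 4 → ℝ) → Matrix (Fin 4) (Fin 4) ℝ) (z : Fin 4 → ℝ) (i j : Fin 4) :
    nijenhuis N z i j j = 0 := by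
  unfold nijenhuis
  apply Finset.sum_eq_zero
  intro l _
  ring

lemma nij_swap (N : (Fin 4 → ℝ) → Matrix (Fin 4) (Fin 4) ℝ) (z : Fin 4 → ℝ) (i j k : Fin 4) :
    nijenhuis N z i j k = - nijenhuis N z i k j := by
  unfold nijenhuis
  rw [← Finset.sum_neg_distrib]
  apply Finset.sum_congr rfl
  intro l _
  ring

set_option maxHeartbeats 4000000 in
lemma NKK_aux (a ω : ℝ) (z : Fin 4 → ℝ) (hy : z 3 ≠ 0) (i j k : Fin 4) (hjk : j < k) :
    nijenhuis (NKK a ω) z i j k = 0 := by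
  fin_cases i <;> fin_cases j <;> fin_cases k <;>
    first
      | exact absurd hjk (by decide)
      | (simp [nijenhuis, Fin.sum_univ_four, NKK_eq, pd_zero, pd_fA a ω z, pd_fB a ω z hy,
           pd_fC a ω z hy, pd_fD a z hy, pd_fE a ω z hy, pd_fF z hy, pd_fCm a ω z hy,
           pd_fFm z hy, Pi.single_apply] <;>
         simp only [fA, fB, fC, fD, fE, fF] <;> field_simp <;> ring)


/-- the coordinate Nijenhuis torsion of `N_KK` vanishes identically on
`{y ≠ 0} ⊂ ℝ⁴`. -/
theorem NKK_torsionless (a ω : ℝ) (z : Fin 4 → ℝ) (hy : z 3 ≠ 0) (i j k : Fin 4) :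
    nijenhuis (NKK a ω) z i j k = 0 := by
  rcases lt_trichotomy j k with h | rfl | h
  · exact NKK_aux a ω z hy i j k h
  · exact nij_diag _ z i j
  · rw [nij_swap, NKK_aux a ω z hy i k j h, neg_zero]
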